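/- Let ν be a centered compactly supported probability measure with variance m^{(2)}(ν), ϑ(λ) the largest solution of ∫ dν(v)/(λv−ϑ)² = 1 with ϑ − λv bounded below on supp ν, and m_fc(E₊) = ∫ dν(v)/(λv − ϑ). Then as λ → 0, m_fc(E₊) = −1 + (λ² m^{(2)}(ν))/2 + O(λ³), and consequently 1 − (m_fc(E₊))² = λ² m^{(2)}(ν) + O(λ³). -/

import Mathlib

/-!
Write `X = λv` and `u = ϑ⁻¹`. On the support of `ν` we have `|X| = O(λ)` and `ϑ - X ≥ c`, and
the gap condition at one point of the support keeps `ϑ ≥ c / 2` for small `λ`. So the second-order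
Taylor expansions of `1 / (X - ϑ)` and `1 / (X - ϑ)²` in `X` have uniformly `O(λ³)` remainders.
Integrating them against the centred measure `ν` turns the defining equation of `ϑ` into
`u² + 3λ²m₂u⁴ = 1 + O(λ³)`, and gives `m_fc = -(u + λ²m₂u³) + O(λ³)`. Solving the first
equation for `u` gives `u = 1 - 3λ²m₂/2 + O(λ³)`, and substituting this into the second gives
`m_fc = -1 + λ²m₂/2 + O(λ³)`. Squaring this gives the expansion of `1 - m_fc²`.
-/

open MeasureTheory Filter Topology Asymptotics

lemma abs_sub_le_abs_sq_sub_sq_div {u a : ℝ} (hu : 0 ≤ u) (ha : 0 < a) :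
    |u - a| ≤ |u ^ 2 - a ^ 2| / a := by
  rw [le_div_iff₀ ha, sq_sub_sq, abs_mul, abs_of_nonneg (by linarith : 0 ≤ u + a)]
  nlinarith [mul_nonneg hu (abs_nonneg (u - a))]

lemma isBigO_pow_mul_of_isBigO_one {α : Type*} {l : Filter α} {f g k : α → ℝ}
    (hf : f =O[l] fun _ => (1 : ℝ)) (hg : g =O[l] k) (n : ℕ) :
    (fun x => f x ^ n * g x) =O[l] k := by
  simpa using (hf.pow n).mul hg

lemma isBigO_one_of_eventually_nonneg_le {α : Type*} {l : Filter α} {u : α → ℝ} {B : ℝ}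
    (hu : ∀ᶠ x in l, 0 ≤ u x ∧ u x ≤ B) : u =O[l] fun _ => (1 : ℝ) :=
  .of_bound B <| hu.mono fun x hx => by
    rw [Real.norm_eq_abs, abs_of_nonneg hx.1, norm_one, mul_one]
    exact hx.2

section SmallParameter

variable {l : Filter ℝ} (hl : l ≤ 𝓝 0)
include hl

lemma isBigO_pow_pow_of_le {j k : ℕ} (hjk : j ≤ k) :
    (fun x : ℝ => x ^ k) =O[l] fun x => x ^ j := by
  rcases hjk.eq_or_lt with rfl | h
  · exact isBigO_refl _ _
  · exact (isLittleO_pow_pow h).isBigO.mono hl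

lemma isBigO_one_sub_sq_expansion {m : ℝ → ℝ} {κ : ℝ}
    (hm : (fun x => m x - (-1 + x ^ 2 * κ / 2)) =O[l] fun x => x ^ 3) :
    (fun x => (1 - m x ^ 2) - x ^ 2 * κ) =O[l] fun x => x ^ 3 := by
  have hsmall : (fun x => x ^ 2 * κ / 2 + (m x - (-1 + x ^ 2 * κ / 2))) =O[l] fun x => x ^ 2 :=
    ((isBigO_refl (fun x : ℝ => x ^ 2) l).const_mul_left (κ / 2)).add
      (hm.trans (isBigO_pow_pow_of_le hl (show 2 ≤ 3 by norm_num))) |>.congr_left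
      fun x => by ring
  have hsq : (fun x => (x ^ 2 * κ / 2 + (m x - (-1 + x ^ 2 * κ / 2))) ^ 2) =O[l]
      fun x => x ^ 3 :=
    (hsmall.pow 2).trans <|
      (isBigO_pow_pow_of_le hl (show 3 ≤ 4 by norm_num)).congr_left fun x => by ring
  exact ((hm.const_mul_left 2).sub hsq).congr_left fun x => by ring

-- `u` stands for `ϑ⁻¹` and `κ` for the variance of `ν`; `hcon` is the defining equation of `ϑ`
-- after integrating the Taylor expansion of `1 / (λv - ϑ)²`.
variable {u : ℝ → ℝ} {κ B : ℝ} (hu : ∀ᶠ x in l, 0 ≤ u x ∧ u x ≤ B)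
  (hcon : (fun x => 1 - (u x ^ 2 + 3 * x ^ 2 * κ * u x ^ 4)) =O[l] fun x => x ^ 3)
include hu hcon

lemma isBigO_root_expansion_of_constraint :
    (fun x => u x - (1 - 3 * x ^ 2 * κ / 2)) =O[l] fun x => x ^ 3 := by
  have hub := isBigO_one_of_eventually_nonneg_le hu
  have h32 := isBigO_pow_pow_of_le hl (show 2 ≤ 3 by norm_num)
  have h43 := isBigO_pow_pow_of_le hl (show 3 ≤ 4 by norm_num)
  have hx2 : (fun x : ℝ => x ^ 2) =O[l] fun x => x ^ 2 := isBigO_refl _ _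
  have hsq : (fun x => u x ^ 2 - 1) =O[l] fun x => x ^ 2 :=
    (((isBigO_pow_mul_of_isBigO_one hub hx2 4).const_mul_left (-3 * κ)).sub
      (hcon.trans h32)).congr_left fun x => by ring
  have hquart : (fun x => u x ^ 4 - 1) =O[l] fun x => x ^ 2 :=
    ((isBigO_pow_mul_of_isBigO_one hub hsq 2).add hsq).congr_left fun x => by ring
  have hsq₂ : (fun x => u x ^ 2 - (1 - 3 * x ^ 2 * κ)) =O[l] fun x => x ^ 3 := by
    have h : (fun x => x ^ 2 * (u x ^ 4 - 1)) =O[l] fun x => x ^ 3 :=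
      (hx2.mul hquart).trans (h43.congr_left fun x => by ring)
    exact (hcon.neg_left.sub (h.const_mul_left (3 * κ))).congr_left fun x => by ring
  have hdiff : (fun x => u x ^ 2 - (1 - 3 * x ^ 2 * κ / 2) ^ 2) =O[l] fun x => x ^ 3 :=
    (hsq₂.sub (((isBigO_refl (fun x : ℝ => x ^ 4) l).const_mul_left (9 * κ ^ 2 / 4)).trans
      h43)).congr_left fun x => by ring
  have hhalf : ∀ᶠ x in l, 1 / 2 < 1 - 3 * x ^ 2 * κ / 2 := by
    have : Tendsto (fun x : ℝ => 1 - 3 * x ^ 2 * κ / 2) l (𝓝 1) := by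
      simpa using ((Continuous.tendsto (by fun_prop) 0).mono_left hl :
        Tendsto (fun x : ℝ => 1 - 3 * x ^ 2 * κ / 2) l _)
    exact this.eventually (lt_mem_nhds (by norm_num))
  refine IsBigO.trans (.of_bound 2 ?_) hdiff
  filter_upwards [hu, hhalf] with x hux hx
  rw [Real.norm_eq_abs, Real.norm_eq_abs]
  calc |u x - (1 - 3 * x ^ 2 * κ / 2)|
      ≤ |u x ^ 2 - (1 - 3 * x ^ 2 * κ / 2) ^ 2| / (1 - 3 * x ^ 2 * κ / 2) :=
        abs_sub_le_abs_sq_sub_sq_div hux.1 (by linarith)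
    _ ≤ 2 * |u x ^ 2 - (1 - 3 * x ^ 2 * κ / 2) ^ 2| := by
        rw [div_le_iff₀ (by linarith)]
        nlinarith [abs_nonneg (u x ^ 2 - (1 - 3 * x ^ 2 * κ / 2) ^ 2)]

lemma isBigO_expansion_of_constraint {m : ℝ → ℝ}
    (hm : (fun x => m x + (u x + x ^ 2 * κ * u x ^ 3)) =O[l] fun x => x ^ 3) :
    (fun x => m x - (-1 + x ^ 2 * κ / 2)) =O[l] fun x => x ^ 3 := by
  have hub := isBigO_one_of_eventually_nonneg_le hu
  have hu₂ := isBigO_root_expansion_of_constraint hl hu hcon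
  have hlin : (fun x => u x - 1) =O[l] fun x => x ^ 2 :=
    ((hu₂.trans (isBigO_pow_pow_of_le hl (show 2 ≤ 3 by norm_num))).sub
      ((isBigO_refl _ _).const_mul_left (3 * κ / 2))).congr_left fun x => by ring
  have hcube : (fun x => u x ^ 3 - 1) =O[l] fun x => x ^ 2 :=
    (((isBigO_pow_mul_of_isBigO_one hub hlin 2).add
      (isBigO_pow_mul_of_isBigO_one hub hlin 1)).add hlin).congr_left fun x => by ring
  have h : (fun x => x ^ 2 * (u x ^ 3 - 1)) =O[l] fun x => x ^ 3 :=
    ((isBigO_refl _ _).mul hcube).trans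
      ((isBigO_pow_pow_of_le hl (show 3 ≤ 4 by norm_num)).congr_left fun x => by ring)
  exact ((hm.sub hu₂).sub (h.const_mul_left κ)).congr_left fun x => by ring

end SmallParameter

lemma one_div_sub_add_taylor {X θ : ℝ} (hθ : θ ≠ 0) (hXθ : X - θ ≠ 0) :
    1 / (X - θ) + (θ⁻¹ + X * θ⁻¹ ^ 2 + X ^ 2 * θ⁻¹ ^ 3) = X ^ 3 / (θ ^ 3 * (X - θ)) := by
  field_simp
  ring

lemma one_div_sub_sq_sub_taylor {X θ : ℝ} (hθ : θ ≠ 0) (hXθ : X - θ ≠ 0) :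
    1 / (X - θ) ^ 2 - (θ⁻¹ ^ 2 + 2 * X * θ⁻¹ ^ 3 + 3 * X ^ 2 * θ⁻¹ ^ 4) =
      X ^ 3 / (θ ^ 3 * (X - θ) ^ 2) - 3 * (X ^ 3 / (θ ^ 4 * (X - θ))) := by
  field_simp
  ring

section TaylorBounds

variable {X θ a b c : ℝ} (ha : 0 < a) (haθ : a ≤ θ) (hc : 0 < c) (hcX : c ≤ θ - X)
  (hX : |X| ≤ b)
include ha haθ hc hcX hX

lemma abs_cube_div_pow_mul_pow_le (k j : ℕ) :
    |X ^ 3 / (θ ^ k * (X - θ) ^ j)| ≤ b ^ 3 / (a ^ k * c ^ j) := by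
  rw [abs_div, abs_mul, abs_pow, abs_pow, abs_pow, abs_of_pos (ha.trans_le haθ), abs_sub_comm,
    abs_of_pos (hc.trans_le hcX)]
  have hb : 0 ≤ b := (abs_nonneg X).trans hX
  have hθ : 0 ≤ θ := ha.le.trans haθ
  gcongr

lemma abs_one_div_sub_add_taylor_le :
    |1 / (X - θ) + (θ⁻¹ + X * θ⁻¹ ^ 2 + X ^ 2 * θ⁻¹ ^ 3)| ≤ b ^ 3 / (a ^ 3 * c) := by
  rw [one_div_sub_add_taylor (by linarith) (by linarith)]
  simpa using abs_cube_div_pow_mul_pow_le ha haθ hc hcX hX 3 1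

lemma abs_one_div_sub_sq_sub_taylor_le :
    |1 / (X - θ) ^ 2 - (θ⁻¹ ^ 2 + 2 * X * θ⁻¹ ^ 3 + 3 * X ^ 2 * θ⁻¹ ^ 4)| ≤
      b ^ 3 / (a ^ 3 * c ^ 2) + 3 * (b ^ 3 / (a ^ 4 * c)) := by
  rw [one_div_sub_sq_sub_taylor (by linarith) (by linarith)]
  refine (abs_sub _ _).trans (add_le_add (abs_cube_div_pow_mul_pow_le ha haθ hc hcX hX 3 2) ?_)
  rw [abs_mul, abs_of_pos three_pos]
  simpa using mul_le_mul_of_nonneg_left (abs_cube_div_pow_mul_pow_le ha haθ hc hcX hX 4 1)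
    zero_le_three

end TaylorBounds

section CompactlySupported

variable {ν : Measure ℝ} [IsProbabilityMeasure ν] {M : ℝ}

lemma integrable_pow_of_ae_abs_le (hM : ∀ᵐ v ∂ν, |v| ≤ M) (n : ℕ) :
    Integrable (fun v => v ^ n) ν :=
  .of_bound (by fun_prop) (M ^ n) <| hM.mono fun v hv => by
    simpa [abs_pow] using pow_le_pow_left₀ (abs_nonneg v) hv n

lemma integrable_quadratic (hM : ∀ᵐ v ∂ν, |v| ≤ M) (a b d : ℝ) :
    Integrable (fun v => a + b * v + d * v ^ 2) ν := by
  have h₁ : Integrable (fun v => v) ν := by simpa using integrable_pow_of_ae_abs_le hM 1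
  exact ((integrable_const a).add (h₁.const_mul b)).add
    ((integrable_pow_of_ae_abs_le hM 2).const_mul d)

lemma integral_quadratic_of_integral_id_eq_zero (hM : ∀ᵐ v ∂ν, |v| ≤ M)
    (hmean : ∫ v, v ∂ν = 0) (a b d : ℝ) :
    ∫ v, (a + b * v + d * v ^ 2) ∂ν = a + d * ∫ v, v ^ 2 ∂ν := by
  have h₁ : Integrable (fun v => v) ν := by simpa using integrable_pow_of_ae_abs_le hM 1
  rw [integral_add (f := fun v => a + b * v) ((integrable_const a).add (h₁.const_mul b))
      ((integrable_pow_of_ae_abs_le hM 2).const_mul d),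
    integral_add (integrable_const a) (h₁.const_mul b), integral_const_mul, integral_const_mul,
    hmean, integral_const]
  simp

lemma abs_integral_sub_quadratic_le (hM : ∀ᵐ v ∂ν, |v| ≤ M) (hmean : ∫ v, v ∂ν = 0)
    {f : ℝ → ℝ} (hf : Integrable f ν) {a b d C : ℝ}
    (hC : ∀ᵐ v ∂ν, |f v - (a + b * v + d * v ^ 2)| ≤ C) :
    |∫ v, f v ∂ν - (a + d * ∫ v, v ^ 2 ∂ν)| ≤ C := by
  rw [← integral_quadratic_of_integral_id_eq_zero hM hmean a b d,
    ← integral_sub hf (integrable_quadratic hM a b d)]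
  simpa using norm_integral_le_of_norm_le_const (μ := ν)
    (hC.mono fun v hv => (Real.norm_eq_abs _).trans_le hv)

lemma integrable_one_div_sub_pow {lam θ c : ℝ} (hc : 0 < c)
    (hgap : ∀ᵐ v ∂ν, c ≤ θ - lam * v) (n : ℕ) :
    Integrable (fun v => 1 / (lam * v - θ) ^ n) ν :=
  .of_bound (by fun_prop : Measurable fun v : ℝ => 1 / (lam * v - θ) ^ n).aestronglyMeasurable
    (1 / c ^ n) <| hgap.mono fun v hv => by
      rw [norm_div, norm_one, norm_pow, Real.norm_eq_abs, abs_sub_comm,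
        abs_of_pos (hc.trans_le hv)]
      gcongr

variable (hM : ∀ᵐ v ∂ν, |v| ≤ M) (hmean : ∫ v, v ∂ν = 0) {a c : ℝ} (ha : 0 < a)
  (hc : 0 < c)
include hM hmean ha hc

section FixedParameter

variable {lam θ : ℝ} (hlam : 0 ≤ lam) (haθ : a ≤ θ) (hgap : ∀ᵐ v ∂ν, c ≤ θ - lam * v)
include hlam haθ hgap

lemma abs_integral_one_div_sub_add_le :
    |∫ v, 1 / (lam * v - θ) ∂ν + (θ⁻¹ + lam ^ 2 * (∫ v, v ^ 2 ∂ν) * θ⁻¹ ^ 3)| ≤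
      (lam * M) ^ 3 / (a ^ 3 * c) := by
  have h := abs_integral_sub_quadratic_le hM hmean (f := fun v => 1 / (lam * v - θ))
    (a := -θ⁻¹) (b := -(lam * θ⁻¹ ^ 2)) (d := -(lam ^ 2 * θ⁻¹ ^ 3))
    (by simpa using integrable_one_div_sub_pow hc hgap 1) <| by
      filter_upwards [hM, hgap] with v hv hgv
      have hb : |lam * v| ≤ lam * M := by rw [abs_mul, abs_of_nonneg hlam]; gcongr
      convert abs_one_div_sub_add_taylor_le ha haθ hc hgv hb using 2
      ring
  convert h using 2
  ring

lemma abs_integral_one_div_sub_sq_sub_le :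
    |∫ v, 1 / (lam * v - θ) ^ 2 ∂ν - (θ⁻¹ ^ 2 + 3 * lam ^ 2 * (∫ v, v ^ 2 ∂ν) * θ⁻¹ ^ 4)| ≤
      (lam * M) ^ 3 / (a ^ 3 * c ^ 2) + 3 * ((lam * M) ^ 3 / (a ^ 4 * c)) := by
  have h := abs_integral_sub_quadratic_le hM hmean (a := θ⁻¹ ^ 2) (b := 2 * lam * θ⁻¹ ^ 3)
    (d := 3 * lam ^ 2 * θ⁻¹ ^ 4) (integrable_one_div_sub_pow hc hgap 2) <| by
      filter_upwards [hM, hgap] with v hv hgv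
      have hb : |lam * v| ≤ lam * M := by rw [abs_mul, abs_of_nonneg hlam]; gcongr
      convert abs_one_div_sub_sq_sub_taylor_le ha haθ hc hgv hb using 3
      ring
  convert h using 3
  ring

end FixedParameter

variable {l : Filter ℝ} {ϑ : ℝ → ℝ}
  (hgood : ∀ᶠ lam in l, 0 ≤ lam ∧ a ≤ ϑ lam ∧ ∀ᵐ v ∂ν, c ≤ ϑ lam - lam * v)
include hgood

lemma isBigO_integral_one_div_sub_add :
    (fun lam => ∫ v, 1 / (lam * v - ϑ lam) ∂ν +
      ((ϑ lam)⁻¹ + lam ^ 2 * (∫ v, v ^ 2 ∂ν) * (ϑ lam)⁻¹ ^ 3)) =O[l] fun lam => lam ^ 3 :=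
  .of_bound (M ^ 3 / (a ^ 3 * c)) <| hgood.mono fun lam ⟨hlam, haθ, hgap⟩ => by
    rw [Real.norm_eq_abs, Real.norm_eq_abs, abs_pow, abs_of_nonneg hlam]
    convert abs_integral_one_div_sub_add_le hM hmean ha hc hlam haθ hgap using 1
    ring

lemma isBigO_integral_one_div_sub_sq_sub :
    (fun lam => ∫ v, 1 / (lam * v - ϑ lam) ^ 2 ∂ν -
      ((ϑ lam)⁻¹ ^ 2 + 3 * lam ^ 2 * (∫ v, v ^ 2 ∂ν) * (ϑ lam)⁻¹ ^ 4)) =O[l]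
      fun lam => lam ^ 3 :=
  .of_bound (M ^ 3 / (a ^ 3 * c ^ 2) + 3 * (M ^ 3 / (a ^ 4 * c))) <|
    hgood.mono fun lam ⟨hlam, haθ, hgap⟩ => by
      rw [Real.norm_eq_abs, Real.norm_eq_abs, abs_pow, abs_of_nonneg hlam]
      convert abs_integral_one_div_sub_sq_sub_le hM hmean ha hc hlam haθ hgap using 1
      ring

end CompactlySupported

lemma eventually_half_le_of_le_sub_mul {ϑ : ℝ → ℝ} {c v₀ : ℝ} (hc : 0 < c)
    (hgap : ∀ᶠ lam in 𝓝[>] (0 : ℝ), c ≤ ϑ lam - lam * v₀) :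
    ∀ᶠ lam in 𝓝[>] (0 : ℝ), c / 2 ≤ ϑ lam := by
  have h : Tendsto (fun lam : ℝ => lam * v₀) (𝓝[>] 0) (𝓝 0) := by
    simpa using ((Continuous.tendsto (by fun_prop) 0).mono_left nhdsWithin_le_nhds :
      Tendsto (fun lam : ℝ => lam * v₀) (𝓝[>] 0) _)
  filter_upwards [hgap, h.eventually (lt_mem_nhds (neg_lt_zero.2 (half_pos hc)))]
    with lam h₁ h₂
  linarith

theorem stmt7_general
    (ν : Measure ℝ) (hprob : IsProbabilityMeasure ν)
    -- `s` is the (compact) topological support of `ν`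
    (s : Set ℝ) (hs_full : ν sᶜ = 0)
    (hs_compact : IsCompact s)
    (hcentered : ∫ v, v ∂ν = 0)
    (ε c : ℝ) (hε : 0 < ε) (hc : 0 < c)
    (ϑ : ℝ → ℝ)
    (hsol : ∀ lam ∈ Set.Ioo (0 : ℝ) ε, ∫ v, 1 / (lam * v - ϑ lam) ^ 2 ∂ν = 1)
    (hgap : ∀ lam ∈ Set.Ioo (0 : ℝ) ε, ∀ v ∈ s, c ≤ ϑ lam - lam * v) :
    ((fun lam : ℝ => (∫ v, 1 / (lam * v - ϑ lam) ∂ν) -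
        (-1 + lam ^ 2 * (∫ v, v ^ 2 ∂ν) / 2))
      =O[𝓝[>] (0 : ℝ)] fun lam : ℝ => lam ^ 3) ∧
    ((fun lam : ℝ => (1 - (∫ v, 1 / (lam * v - ϑ lam) ∂ν) ^ 2) -
        lam ^ 2 * (∫ v, v ^ 2 ∂ν))
      =O[𝓝[>] (0 : ℝ)] fun lam : ℝ => lam ^ 3) := by
  obtain ⟨M, hM⟩ := hs_compact.isBounded.exists_norm_le
  have hs : ∀ᵐ v ∂ν, v ∈ s := mem_ae_iff.2 hs_full
  obtain ⟨v₀, hv₀⟩ := hs.exists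
  have hε' : ∀ᶠ lam in 𝓝[>] (0 : ℝ), lam ∈ Set.Ioo 0 ε := Ioo_mem_nhdsGT hε
  have hϑ := eventually_half_le_of_le_sub_mul hc (hε'.mono fun lam h => hgap lam h v₀ hv₀)
  have hgood : ∀ᶠ lam in 𝓝[>] (0 : ℝ),
      0 ≤ lam ∧ c / 2 ≤ ϑ lam ∧ ∀ᵐ v ∂ν, c ≤ ϑ lam - lam * v := by
    filter_upwards [hε', hϑ] with lam hlam hlamϑ
      using ⟨hlam.1.le, hlamϑ, hs.mono (hgap lam hlam)⟩
  have hu : ∀ᶠ lam in 𝓝[>] (0 : ℝ), 0 ≤ (ϑ lam)⁻¹ ∧ (ϑ lam)⁻¹ ≤ (c / 2)⁻¹ :=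
    hϑ.mono fun lam h => ⟨inv_nonneg.2 (by linarith), inv_anti₀ (half_pos hc) h⟩
  have hM_ae : ∀ᵐ v ∂ν, |v| ≤ M := hs.mono hM
  have hcon : (fun lam =>
      1 - ((ϑ lam)⁻¹ ^ 2 + 3 * lam ^ 2 * (∫ v, v ^ 2 ∂ν) * (ϑ lam)⁻¹ ^ 4))
      =O[𝓝[>] (0 : ℝ)] fun lam => lam ^ 3 :=
    (isBigO_integral_one_div_sub_sq_sub hM_ae hcentered (half_pos hc) hc hgood).congr'
      (hε'.mono fun lam h => by dsimp only; rw [hsol lam h]) EventuallyEq.rfl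
  have hm := isBigO_expansion_of_constraint nhdsWithin_le_nhds hu hcon
    (isBigO_integral_one_div_sub_add hM_ae hcentered (half_pos hc) hc hgood)
  exact ⟨hm, isBigO_one_sub_sq_expansion nhdsWithin_le_nhds hm⟩

/-- Let `ν` be a centered compactly supported probability measure with
variance `m²(ν)`, `ϑ(λ)` the largest solution of `∫ dν(v)/(λv−ϑ)² = 1` with `ϑ − λv`
bounded below on `supp ν`, and `m_fc(E₊) = ∫ dν(v)/(λv − ϑ)`.  Then as `λ → 0⁺`,
`m_fc(E₊) = −1 + (λ² m²)/2 + O(λ³)`, and consequently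
`1 − (m_fc(E₊))² = λ² m² + O(λ³)`. -/
theorem stmt7
    (ν : Measure ℝ) (hprob : IsProbabilityMeasure ν)
    -- `s` is the (compact) topological support of `ν`
    (s : Set ℝ) (hs_closed : IsClosed s) (hs_full : ν sᶜ = 0)
    (hs_min : ∀ t : Set ℝ, IsClosed t → ν tᶜ = 0 → s ⊆ t)
    (hs_compact : IsCompact s)
    (hcentered : ∫ v, v ∂ν = 0)
    (ε c : ℝ) (hε : 0 < ε) (hc : 0 < c)
    (ϑ : ℝ → ℝ)
    (hpos : ∀ lam ∈ Set.Ioo (0 : ℝ) ε, 0 < ϑ lam)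
    (hsol : ∀ lam ∈ Set.Ioo (0 : ℝ) ε, ∫ v, 1 / (lam * v - ϑ lam) ^ 2 ∂ν = 1)
    (hmax : ∀ lam ∈ Set.Ioo (0 : ℝ) ε, ∀ t : ℝ,
      (∫ v, 1 / (lam * v - t) ^ 2 ∂ν) = 1 → t ≤ ϑ lam)
    (hgap : ∀ lam ∈ Set.Ioo (0 : ℝ) ε, ∀ v ∈ s, c ≤ ϑ lam - lam * v) :
    ((fun lam : ℝ => (∫ v, 1 / (lam * v - ϑ lam) ∂ν) -
        (-1 + lam ^ 2 * (∫ v, v ^ 2 ∂ν) / 2))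
      =O[𝓝[>] (0 : ℝ)] fun lam : ℝ => lam ^ 3) ∧
    ((fun lam : ℝ => (1 - (∫ v, 1 / (lam * v - ϑ lam) ∂ν) ^ 2) -
        lam ^ 2 * (∫ v, v ^ 2 ∂ν))
      =O[𝓝[>] (0 : ℝ)] fun lam : ℝ => lam ^ 3) :=
  stmt7_general ν hprob s hs_full hs_compact hcentered ε c hε hc ϑ hsol hgap
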